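/- arXiv:1104.2568 — 4 statements merged into one kernel-verified Lean document; each statement's English description precedes it below -/
import Mathlib

section
/- Let B be a g×g complex matrix whose real part is negative definite (in particular Re(B) is invertible), let h ∈ ℝ^g, d ∈ ℂ^g and T, M ∈ ℤ^g, and suppose conj(d) = d − iπh + 2πiT + BM (componentwise complex conjugation). Then M = 0 and d = Re(d) + (iπ/2)(h − 2T); that is, there exists d_R ∈ ℝ^g with d = d_R + (iπ/2)(h − 2T). -/
open Complex ComplexConjugate

noncomputable section

/-- if `Re B` is negative definite and
`conj(d) = d − iπh + 2πiT + BM` with `h ∈ ℝ^g`, `T, M ∈ ℤ^g`, then `M = 0` and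
`d = Re(d) + (iπ/2)(h − 2T)`. -/
theorem stmt_11 {g : ℕ} (hg : 1 ≤ g) (B : Matrix (Fin g) (Fin g) ℂ)
    (hBneg : ∀ x : Fin g → ℝ, x ≠ 0 → ∑ i, ∑ j, (B i j).re * x i * x j < 0)
    (h : Fin g → ℝ) (d : Fin g → ℂ) (T M : Fin g → ℤ)
    (hd : ∀ i, conj (d i)
      = d i - (Real.pi : ℂ) * I * (h i : ℂ) + 2 * (Real.pi : ℂ) * I * (T i : ℂ)
        + B.mulVec (fun j => (M j : ℂ)) i) :
    (∀ i, M i = 0) ∧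
    (∀ i, d i = ((d i).re : ℂ)
      + ((Real.pi : ℂ) * I / 2) * ((h i : ℂ) - 2 * (T i : ℂ))) := by
  have hre : ∀ i, ∑ j, (B i j).re * (M j : ℝ) = 0 := by
    intro i
    have h1 := congrArg Complex.re (hd i)
    simp [Matrix.mulVec, dotProduct, Complex.re_sum, Complex.mul_re] at h1
    linarith [h1]
  have hM : ∀ i, M i = 0 := by
    by_contra hc
    push_neg at hc
    obtain ⟨i0, hi0⟩ := hc
    have hx : (fun j => (M j : ℝ)) ≠ 0 := by
      intro hz
      have := congrFun hz i0
      simp at this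
      exact hi0 (by exact_mod_cast this)
    have hneg := hBneg _ hx
    have hzero : ∑ i, ∑ j, (B i j).re * (M i : ℝ) * (M j : ℝ) = 0 := by
      apply Finset.sum_eq_zero
      intro i _
      have : ∑ j, (B i j).re * (M i : ℝ) * (M j : ℝ)
          = (M i : ℝ) * ∑ j, (B i j).re * (M j : ℝ) := by
        rw [Finset.mul_sum]; apply Finset.sum_congr rfl; intro j _; ring
      rw [this, hre i, mul_zero]
    linarith
  refine ⟨hM, fun i => ?_⟩
  have hmv : B.mulVec (fun j => (M j : ℂ)) i = 0 := by
    simp [Matrix.mulVec, dotProduct, hM]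
  have h1 := congrArg Complex.im (hd i)
  rw [hmv] at h1
  simp [Complex.mul_im] at h1
  apply Complex.ext
  · simp
  · simp [Complex.mul_im, Complex.div_im]
    linarith
end
end

section
/- Assume conj(B) = B − 2πiH for a symmetric g×g integer matrix H. Let V_a, W_a, V_b, W_b ∈ ℂ^g satisfy conj(V_a) = −V_a, conj(W_a) = −W_a, conj(V_b) = −V_b, conj(W_b) = −W_b. Let r ∈ ℂ^g and N, M ∈ ℤ^g satisfy conj(r) = −r − 2πiN − BM and 2N + HM = 0. Let κ₁, κ₂ ∈ ℝ∖{0}, h ∈ ℝ, and K₁(a,b), K₂(a,b), K₁(b,a), K₂(b,a) ∈ ℂ with conj(K₁(a,b)) = K₁(a,b) − ⟨V_a,M⟩, conj(K₂(a,b)) = K₂(a,b) + ⟨W_a,M⟩, conj(K₁(b,a)) = K₁(b,a) + ⟨V_b,M⟩, conj(K₂(b,a)) = K₂(b,a) − ⟨W_b,M⟩. Let d = d_R + (iπ/2)(diag(H) − 2T) with d_R ∈ ℝ^g and T ∈ ℤ^g. Let ρ ∈ {1,−1} and q₂ ∈ ℂ be such that the number −ρκ₁κ₂q₂·exp((1/2)⟨BM,M⟩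 + ⟨r + d, M⟩) is a positive real number; set |A| equal to its positive square root and A = |A|e^{iθ} for some θ ∈ ℝ. Define Z(ξ,η,t) = i(κ₁V_aξ − κ₂V_bη + (κ₁²W_a − κ₂²W_b)t/2), G₁ = κ₁K₁(a,b), G₂ = κ₂K₁(b,a), G₃ = κ₁²K₂(a,b) + κ₂²K₂(b,a) + h, ψ = A·Θ(Z−d+r)/Θ(Z−d)·exp(i(−G₁ξ − G₂η + G₃t/2)), ψ* = −(κ₁κ₂q₂/A)·Θ(Z−d−r)/Θ(Z−d)·exp(i(G₁ξ + G₂η − G₃t/2)). Then for all real ξ, η, t with Θ(Z(ξ,η,t)−d) ≠ 0, the DS1 reality condition holds: ψ*(ξ,η,t) = ρ·conj(ψ(ξ,η,t)). -/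
open Complex ComplexConjugate

noncomputable section

/-- Bilinear pairing ⟨u,v⟩ = Σ uᵢ vᵢ (no complex conjugation). -/
def pairC {g : ℕ} (u v : Fin g → ℂ) : ℂ := ∑ i, u i * v i

/-- The Riemann theta function with period matrix `B`. -/
def theta {g : ℕ} (B : Matrix (Fin g) (Fin g) ℂ) (z : Fin g → ℂ) : ℂ :=
  ∑' m : Fin g → ℤ,
    Complex.exp ((1 / 2) * pairC (B.mulVec (fun i => (m i : ℂ))) (fun i => (m i : ℂ))
      + pairC (fun i => (m i : ℂ)) z)


lemma parity_aux : ∀ (g : ℕ) (H : Fin g → Fin g → ℤ) (m : Fin g → ℤ),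
    (∀ i j, H i j = H j i) →
    ∃ k : ℤ, ∑ i, ∑ j, H i j * m j * m i = (∑ i, H i i * m i) + 2 * k := by
  intro g
  induction g with
  | zero => intro H m _; exact ⟨0, by simp⟩
  | succ n ih =>
    intro H m hsym
    obtain ⟨k1, hk1⟩ := ih (fun i j => H i.castSucc j.castSucc) (fun i => m i.castSucc)
      (fun i j => hsym _ _)
    obtain ⟨k2, hk2⟩ := Int.even_mul_succ_self (m (Fin.last n) - 1)
    have h3 : ∑ i : Fin n, H (Fin.last n) i.castSucc * m i.castSucc * m (Fin.last n)
            = ∑ i : Fin n, H i.castSucc (Fin.last n) * m (Fin.last n) * m i.castSucc := by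
      refine Finset.sum_congr rfl fun i _ => ?_
      rw [hsym (Fin.last n) i.castSucc]; ring
    refine ⟨k1 + (∑ i : Fin n, H i.castSucc (Fin.last n) * m (Fin.last n) * m i.castSucc)
      + H (Fin.last n) (Fin.last n) * k2, ?_⟩
    simp only [Fin.sum_univ_castSucc, Finset.sum_add_distrib]
    linear_combination hk1 + h3 + H (Fin.last n) (Fin.last n) * hk2

lemma theta_conj {g : ℕ} (B : Matrix (Fin g) (Fin g) ℂ)
    (H : Matrix (Fin g) (Fin g) ℤ) (hHsymm : H.IsSymm)
    (hBH : ∀ i j, conj (B i j) = B i j - 2 * (Real.pi : ℂ) * I * (H i j : ℂ))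
    (z : Fin g → ℂ) :
    conj (theta B z)
      = theta B (fun i => conj (z i) - (Real.pi : ℂ) * I * (H i i : ℂ)) := by
  rw [theta, theta, starRingEnd_apply, tsum_star]
  refine tsum_congr fun m => ?_
  rw [← starRingEnd_apply, ← Complex.exp_conj]
  obtain ⟨k, hk⟩ := parity_aux g (fun i j => H i j) m (fun i j => by exact hHsymm.apply j i)
  have hkC : (∑ i, ∑ j, (H i j : ℂ) * (m j : ℂ) * (m i : ℂ))
      = (∑ i, (H i i : ℂ) * (m i : ℂ)) + 2 * (k : ℂ) := by
    exact_mod_cast hk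
  have harg : conj ((1 / 2) * pairC (B.mulVec (fun i => (m i : ℂ))) (fun i => (m i : ℂ))
        + pairC (fun i => (m i : ℂ)) z)
      = ((1 / 2) * pairC (B.mulVec (fun i => (m i : ℂ))) (fun i => (m i : ℂ))
          + pairC (fun i => (m i : ℂ)) (fun i => conj (z i) - (Real.pi : ℂ) * I * (H i i : ℂ)))
        + ((-k : ℤ) : ℂ) * (2 * (Real.pi : ℂ) * I) := by
    simp only [pairC, Matrix.mulVec, dotProduct, map_add, map_mul, map_sum,
      map_div₀, map_one, map_ofNat, map_intCast, hBH]
    have e1 : ∑ i, (∑ j, (B i j - 2 * (Real.pi : ℂ) * I * (H i j : ℂ)) * (m j : ℂ)) * (m i : ℂ)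
        = (∑ i, (∑ j, B i j * (m j : ℂ)) * (m i : ℂ))
          - 2 * (Real.pi : ℂ) * I * ∑ i, ∑ j, (H i j : ℂ) * (m j : ℂ) * (m i : ℂ) := by
      rw [Finset.mul_sum, ← Finset.sum_sub_distrib]
      refine Finset.sum_congr rfl fun i _ => ?_
      rw [Finset.mul_sum, Finset.sum_mul, Finset.sum_mul, ← Finset.sum_sub_distrib]
      refine Finset.sum_congr rfl fun j _ => ?_
      ring
    have e2 : ∑ i, (m i : ℂ) * (conj (z i) - (Real.pi : ℂ) * I * (H i i : ℂ))
        = (∑ i, (m i : ℂ) * conj (z i))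
          - (Real.pi : ℂ) * I * ∑ i, (H i i : ℂ) * (m i : ℂ) := by
      rw [Finset.mul_sum, ← Finset.sum_sub_distrib]
      refine Finset.sum_congr rfl fun i _ => ?_
      ring
    rw [e1, e2]
    push_cast
    linear_combination (-(Real.pi : ℂ) * I) * hkC
  rw [harg, Complex.exp_add, Complex.exp_int_mul_two_pi_mul_I, mul_one]

lemma pairC_add_left {g : ℕ} (u v w : Fin g → ℂ) :
    pairC (u + v) w = pairC u w + pairC v w := by
  simp [pairC, add_mul, Finset.sum_add_distrib]

lemma pairC_add_right {g : ℕ} (u v w : Fin g → ℂ) :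
    pairC u (v + w) = pairC u v + pairC u w := by
  simp [pairC, mul_add, Finset.sum_add_distrib]

lemma pairC_sub_right {g : ℕ} (u v w : Fin g → ℂ) :
    pairC u (v - w) = pairC u v - pairC u w := by
  simp [pairC, mul_sub, Finset.sum_sub_distrib]

lemma pairC_comm {g : ℕ} (u v : Fin g → ℂ) : pairC u v = pairC v u := by
  simp [pairC, mul_comm]

lemma pairC_mulVec_symm {g : ℕ} (B : Matrix (Fin g) (Fin g) ℂ) (hBsymm : B.IsSymm)
    (u v : Fin g → ℂ) :
    pairC (B.mulVec u) v = pairC (B.mulVec v) u := by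
  simp only [pairC, Matrix.mulVec, dotProduct, Finset.sum_mul]
  rw [Finset.sum_comm]
  refine Finset.sum_congr rfl fun i _ => Finset.sum_congr rfl fun j _ => ?_
  rw [hBsymm.apply i j]; ring

lemma theta_periodic {g : ℕ} (B : Matrix (Fin g) (Fin g) ℂ) (z : Fin g → ℂ)
    (c : Fin g → ℤ) :
    theta B (fun i => z i + 2 * (Real.pi : ℂ) * I * (c i : ℂ)) = theta B z := by
  rw [theta, theta]
  refine tsum_congr fun m => ?_
  have harg : pairC (fun i => ((m i : ℤ) : ℂ)) (fun i => z i + 2 * (Real.pi : ℂ) * I * (c i : ℂ))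
      = pairC (fun i => ((m i : ℤ) : ℂ)) z
        + ((∑ i, m i * c i : ℤ) : ℂ) * (2 * (Real.pi : ℂ) * I) := by
    simp only [pairC]
    push_cast
    rw [Finset.sum_mul, ← Finset.sum_add_distrib]
    refine Finset.sum_congr rfl fun i _ => ?_
    ring
  rw [harg, ← add_assoc, Complex.exp_add, Complex.exp_int_mul_two_pi_mul_I, mul_one]

lemma theta_shift {g : ℕ} (B : Matrix (Fin g) (Fin g) ℂ) (hBsymm : B.IsSymm)
    (z : Fin g → ℂ) (M : Fin g → ℤ) :
    theta B (fun i => z i - B.mulVec (fun j => (M j : ℂ)) i)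
      = Complex.exp (-(1 / 2) * pairC (B.mulVec (fun j => (M j : ℂ))) (fun j => (M j : ℂ))
          + pairC (fun j => (M j : ℂ)) z) * theta B z := by
  set Mc : Fin g → ℂ := fun j => (M j : ℂ) with hMc
  rw [theta, theta, ← tsum_mul_left]
  rw [← Equiv.tsum_eq (Equiv.addRight M)]
  refine tsum_congr fun m => ?_
  set mc : Fin g → ℂ := fun j => (m j : ℂ) with hmc
  rw [← Complex.exp_add]
  congr 1
  have h1 : (fun i => ((Equiv.addRight M m) i : ℂ)) = mc + Mc := by
    funext i
    simp [Equiv.coe_addRight, hmc, hMc]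
  have h2 : (fun i => z i - B.mulVec Mc i) = z - B.mulVec Mc := rfl
  rw [h1, h2, Matrix.mulVec_add, pairC_add_left, pairC_add_right, pairC_add_right,
    pairC_add_left, pairC_sub_right, pairC_sub_right,
    pairC_mulVec_symm B hBsymm mc Mc, pairC_comm mc (B.mulVec Mc),
    pairC_comm Mc (B.mulVec Mc)]
  ring

/-- reality condition `ψ* = ρ conj(ψ)` for the theta-functional
solutions of the DS1 equation. -/
theorem stmt_13 {g : ℕ} (hg : 1 ≤ g) (B : Matrix (Fin g) (Fin g) ℂ)
    (hBsymm : B.IsSymm)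
    (hBneg : ∀ x : Fin g → ℝ, x ≠ 0 → ∑ i, ∑ j, (B i j).re * x i * x j < 0)
    (H : Matrix (Fin g) (Fin g) ℤ) (hHsymm : H.IsSymm)
    (hBH : ∀ i j, conj (B i j) = B i j - 2 * (Real.pi : ℂ) * I * (H i j : ℂ))
    (Va Wa Vb Wb : Fin g → ℂ)
    (hVa : ∀ i, conj (Va i) = -Va i) (hWa : ∀ i, conj (Wa i) = -Wa i)
    (hVb : ∀ i, conj (Vb i) = -Vb i) (hWb : ∀ i, conj (Wb i) = -Wb i)
    (r : Fin g → ℂ) (N M : Fin g → ℤ)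
    (hr : ∀ i, conj (r i)
      = -r i - 2 * (Real.pi : ℂ) * I * (N i : ℂ) - B.mulVec (fun j => (M j : ℂ)) i)
    (hNM : ∀ i, 2 * N i + H.mulVec M i = 0)
    (κ₁ κ₂ : ℝ) (hκ₁ : κ₁ ≠ 0) (hκ₂ : κ₂ ≠ 0) (h : ℝ)
    (K1ab K2ab K1ba K2ba : ℂ)
    (hK1ab : conj K1ab = K1ab - ∑ i, Va i * (M i : ℂ))
    (hK2ab : conj K2ab = K2ab + ∑ i, Wa i * (M i : ℂ))
    (hK1ba : conj K1ba = K1ba + ∑ i, Vb i * (M i : ℂ))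
    (hK2ba : conj K2ba = K2ba - ∑ i, Wb i * (M i : ℂ))
    (dR : Fin g → ℝ) (T : Fin g → ℤ) (d : Fin g → ℂ)
    (hd : ∀ i, d i = (dR i : ℂ)
      + ((Real.pi : ℂ) * I / 2) * ((H i i : ℂ) - 2 * (T i : ℂ)))
    (ρ : ℝ) (hρ : ρ = 1 ∨ ρ = -1) (q₂ : ℂ)
    (Aabs : ℝ) (hAabspos : 0 < Aabs)
    (hAsq : (Aabs : ℂ) ^ 2
      = -(ρ : ℂ) * (κ₁ : ℂ) * (κ₂ : ℂ) * q₂ *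
          Complex.exp ((1 / 2) * pairC (B.mulVec (fun j => (M j : ℂ))) (fun j => (M j : ℂ))
            + ∑ i, (r i + d i) * (M i : ℂ)))
    (θ : ℝ) (A : ℂ) (hA : A = (Aabs : ℂ) * Complex.exp (I * (θ : ℂ)))
    (Z : ℝ → ℝ → ℝ → Fin g → ℂ)
    (hZ : ∀ ξ η t : ℝ, Z ξ η t = fun i =>
      I * ((κ₁ : ℂ) * Va i * (ξ : ℂ) - (κ₂ : ℂ) * Vb i * (η : ℂ)
        + ((κ₁ : ℂ) ^ 2 * Wa i - (κ₂ : ℂ) ^ 2 * Wb i) * (t : ℂ) / 2))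
    (G₁ G₂ G₃ : ℂ) (hG₁ : G₁ = (κ₁ : ℂ) * K1ab) (hG₂ : G₂ = (κ₂ : ℂ) * K1ba)
    (hG₃ : G₃ = (κ₁ : ℂ) ^ 2 * K2ab + (κ₂ : ℂ) ^ 2 * K2ba + (h : ℂ))
    (ψ ψs : ℝ → ℝ → ℝ → ℂ)
    (hψ : ∀ ξ η t : ℝ, ψ ξ η t =
      A * theta B (Z ξ η t - d + r) / theta B (Z ξ η t - d) *
        Complex.exp (I * (-(G₁ * (ξ : ℂ)) - G₂ * (η : ℂ) + G₃ * (t : ℂ) / 2)))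
    (hψs : ∀ ξ η t : ℝ, ψs ξ η t =
      -((κ₁ : ℂ) * (κ₂ : ℂ) * q₂ / A) * theta B (Z ξ η t - d - r) / theta B (Z ξ η t - d) *
        Complex.exp (I * (G₁ * (ξ : ℂ) + G₂ * (η : ℂ) - G₃ * (t : ℂ) / 2))) :
    ∀ ξ η t : ℝ, theta B (Z ξ η t - d) ≠ 0 →
      ψs ξ η t = (ρ : ℂ) * conj (ψ ξ η t) := by
  intro ξ η t hθ0
  have hconjZ : ∀ i, conj (Z ξ η t i) = Z ξ η t i := by
    intro i
    simp only [hZ]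
    simp only [map_mul, map_add, map_sub, map_div₀, map_pow, Complex.conj_I,
      Complex.conj_ofReal, map_ofNat, hVa, hVb, hWa, hWb]
    ring
  have hconjd : ∀ i, conj (d i)
      = d i - (Real.pi : ℂ) * I * (H i i : ℂ) + 2 * (Real.pi : ℂ) * I * (T i : ℂ) := by
    intro i
    rw [hd i]
    simp only [map_mul, map_add, map_sub, map_div₀, Complex.conj_I,
      Complex.conj_ofReal, map_ofNat, map_intCast]
    ring
  have hden : conj (theta B (Z ξ η t - d)) = theta B (Z ξ η t - d) := by
    rw [theta_conj B H hHsymm hBH]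
    have e0 : (fun i => conj ((Z ξ η t - d) i) - (Real.pi : ℂ) * I * (H i i : ℂ))
        = fun i => (Z ξ η t - d) i + 2 * (Real.pi : ℂ) * I * ((-T i : ℤ) : ℂ) := by
      funext i
      simp only [Pi.sub_apply, map_sub]
      rw [hconjZ i, hconjd i]
      push_cast
      ring
    rw [e0, theta_periodic]
  have hnum : conj (theta B (Z ξ η t - d + r))
      = Complex.exp (-(1 / 2) * pairC (B.mulVec (fun j => (M j : ℂ))) (fun j => (M j : ℂ))
          + pairC (fun j => (M j : ℂ)) (Z ξ η t - d - r)) * theta B (Z ξ η t - d - r) := by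
    rw [theta_conj B H hHsymm hBH]
    have e1 : (fun i => conj ((Z ξ η t - d + r) i) - (Real.pi : ℂ) * I * (H i i : ℂ))
        = fun i => ((Z ξ η t - d - r) i - B.mulVec (fun j => (M j : ℂ)) i)
            + 2 * (Real.pi : ℂ) * I * ((-T i - N i : ℤ) : ℂ) := by
      funext i
      simp only [Pi.sub_apply, Pi.add_apply, map_sub, map_add]
      rw [hconjZ i, hconjd i, hr i]
      push_cast
      ring
    have e2 := theta_periodic B
      (fun i => (Z ξ η t - d - r) i - B.mulVec (fun j => (M j : ℂ)) i)
      (fun i => -T i - N i)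
    rw [e1, e2, theta_shift B hBsymm (Z ξ η t - d - r) M]
  have hA0 : A ≠ 0 := by
    rw [hA]
    exact mul_ne_zero (Complex.ofReal_ne_zero.mpr hAabspos.ne') (Complex.exp_ne_zero _)
  have h0 : Complex.exp (-I * (θ : ℂ)) * Complex.exp (I * (θ : ℂ)) = 1 := by
    rw [← Complex.exp_add, show -I * (θ : ℂ) + I * (θ : ℂ) = 0 by ring, Complex.exp_zero]
  have hAA : conj A * A = (Aabs : ℂ) ^ 2 := by
    simp only [hA, map_mul, ← Complex.exp_conj, Complex.conj_I, Complex.conj_ofReal]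
    linear_combination ((Aabs : ℂ) ^ 2) * h0
  have hρρ : (ρ : ℂ) * (ρ : ℂ) = 1 := by
    rcases hρ with hh | hh <;> rw [hh] <;> norm_num
  have hcG₁ : conj G₁ = G₁ - (κ₁ : ℂ) * ∑ i, Va i * (M i : ℂ) := by
    rw [hG₁, map_mul, Complex.conj_ofReal, hK1ab]; ring
  have hcG₂ : conj G₂ = G₂ + (κ₂ : ℂ) * ∑ i, Vb i * (M i : ℂ) := by
    rw [hG₂, map_mul, Complex.conj_ofReal, hK1ba]; ring
  have hcG₃ : conj G₃ = G₃ + (κ₁ : ℂ) ^ 2 * (∑ i, Wa i * (M i : ℂ))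
      - (κ₂ : ℂ) ^ 2 * ∑ i, Wb i * (M i : ℂ) := by
    simp only [hG₃, map_add, map_mul, map_pow, Complex.conj_ofReal, hK2ab, hK2ba]
    ring
  have hS : conj (I * (-(G₁ * (ξ : ℂ)) - G₂ * (η : ℂ) + G₃ * (t : ℂ) / 2))
      = -I * (-((G₁ - (κ₁ : ℂ) * ∑ i, Va i * (M i : ℂ)) * (ξ : ℂ))
          - (G₂ + (κ₂ : ℂ) * ∑ i, Vb i * (M i : ℂ)) * (η : ℂ)
          + (G₃ + (κ₁ : ℂ) ^ 2 * (∑ i, Wa i * (M i : ℂ))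
              - (κ₂ : ℂ) ^ 2 * ∑ i, Wb i * (M i : ℂ)) * (t : ℂ) / 2) := by
    simp only [map_mul, map_add, map_sub, map_neg, map_div₀, Complex.conj_I,
      Complex.conj_ofReal, map_ofNat, hcG₁, hcG₂, hcG₃]
  have hMZ : pairC (fun j => (M j : ℂ)) (Z ξ η t - d - r)
      = (∑ i, (M i : ℂ) * Z ξ η t i) - (∑ i, (M i : ℂ) * d i) - (∑ i, (M i : ℂ) * r i) := by
    simp only [pairC, Pi.sub_apply, mul_sub, Finset.sum_sub_distrib]
  have hrd : ∑ i, (r i + d i) * (M i : ℂ)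
      = (∑ i, (M i : ℂ) * r i) + (∑ i, (M i : ℂ) * d i) := by
    rw [← Finset.sum_add_distrib]
    exact Finset.sum_congr rfl fun i _ => by ring
  have hZsum : ∑ i, (M i : ℂ) * Z ξ η t i
      = I * ((κ₁ : ℂ) * (ξ : ℂ) * (∑ i, Va i * (M i : ℂ))
          - (κ₂ : ℂ) * (η : ℂ) * (∑ i, Vb i * (M i : ℂ))
          + ((κ₁ : ℂ) ^ 2 * (∑ i, Wa i * (M i : ℂ))
              - (κ₂ : ℂ) ^ 2 * (∑ i, Wb i * (M i : ℂ))) * (t : ℂ) / 2) := by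
    simp only [hZ]
    have e3 : ∀ i : Fin g, (M i : ℂ) * (I * ((κ₁ : ℂ) * Va i * (ξ : ℂ)
          - (κ₂ : ℂ) * Vb i * (η : ℂ)
          + ((κ₁ : ℂ) ^ 2 * Wa i - (κ₂ : ℂ) ^ 2 * Wb i) * (t : ℂ) / 2))
        = (I * (κ₁ : ℂ) * (ξ : ℂ)) * (Va i * (M i : ℂ))
          - (I * (κ₂ : ℂ) * (η : ℂ)) * (Vb i * (M i : ℂ))
          + (I * (κ₁ : ℂ) ^ 2 * (t : ℂ) / 2) * (Wa i * (M i : ℂ))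
          - (I * (κ₂ : ℂ) ^ 2 * (t : ℂ) / 2) * (Wb i * (M i : ℂ)) := fun i => by ring
    rw [Finset.sum_congr rfl fun i _ => e3 i]
    simp only [Finset.sum_add_distrib, Finset.sum_sub_distrib, ← Finset.mul_sum]
    ring
  have hexp : Complex.exp ((1 / 2) * pairC (B.mulVec (fun j => (M j : ℂ))) (fun j => (M j : ℂ))
          + ∑ i, (r i + d i) * (M i : ℂ))
        * Complex.exp (-(1 / 2) * pairC (B.mulVec (fun j => (M j : ℂ))) (fun j => (M j : ℂ))
          + pairC (fun j => (M j : ℂ)) (Z ξ η t - d - r))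
        * Complex.exp (conj (I * (-(G₁ * (ξ : ℂ)) - G₂ * (η : ℂ) + G₃ * (t : ℂ) / 2)))
      = Complex.exp (I * (G₁ * (ξ : ℂ) + G₂ * (η : ℂ) - G₃ * (t : ℂ) / 2)) := by
    rw [← Complex.exp_add, ← Complex.exp_add]
    congr 1
    rw [hS, hMZ, hrd, hZsum]
    ring
  have k1 : (ρ : ℂ) * (Aabs : ℂ) ^ 2
      = -((κ₁ : ℂ) * (κ₂ : ℂ) * q₂)
        * Complex.exp ((1 / 2) * pairC (B.mulVec (fun j => (M j : ℂ))) (fun j => (M j : ℂ))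
            + ∑ i, (r i + d i) * (M i : ℂ)) := by
    rw [hAsq]
    linear_combination (-((κ₁ : ℂ) * (κ₂ : ℂ) * q₂)
      * Complex.exp ((1 / 2) * pairC (B.mulVec (fun j => (M j : ℂ))) (fun j => (M j : ℂ))
          + ∑ i, (r i + d i) * (M i : ℂ))) * hρρ
  rw [hψs ξ η t, hψ ξ η t, map_mul, map_div₀, map_mul, hnum, hden, ← Complex.exp_conj]
  have hiA : A * A⁻¹ = 1 := mul_inv_cancel₀ hA0
  set EC := Complex.exp (-(1 / 2) * pairC (B.mulVec (fun j => (M j : ℂ))) (fun j => (M j : ℂ))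
      + pairC (fun j => (M j : ℂ)) (Z ξ η t - d - r)) with hEC
  set ES := Complex.exp (conj (I * (-(G₁ * (ξ : ℂ)) - G₂ * (η : ℂ) + G₃ * (t : ℂ) / 2))) with hES
  set EP := Complex.exp ((1 / 2) * pairC (B.mulVec (fun j => (M j : ℂ))) (fun j => (M j : ℂ))
      + ∑ i, (r i + d i) * (M i : ℂ)) with hEP
  set TM := theta B (Z ξ η t - d - r) with hTM
  set T0 := theta B (Z ξ η t - d) with hT0
  linear_combination ((ρ : ℂ) * (EC * ES * TM * T0⁻¹) * conj A) * hiA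
    - ((ρ : ℂ) * (EC * ES * TM * T0⁻¹) * A⁻¹) * hAA
    - ((EC * ES * TM * T0⁻¹) * A⁻¹) * k1
    + ((κ₁ : ℂ) * (κ₂ : ℂ) * q₂ * TM * T0⁻¹ * A⁻¹) * hexp
end
end

section
/- Assume conj(B) = B − 2πiH for a symmetric g×g integer matrix H. Let V_a, W_a, V_b, W_b ∈ ℂ^g satisfy conj(V_a) = −V_b and conj(W_a) = −W_b. Let r ∈ ℂ^g and N ∈ ℤ^g satisfy conj(r) = r − 2πiN. Let κ₁ ∈ ℂ∖{0}, κ₂ = conj(κ₁), h ∈ ℝ, and K₁(a,b), K₂(a,b), K₁(b,a), K₂(b,a) ∈ ℂ with conj(K₁(a,b)) = K₁(b,a) and conj(K₂(a,b)) = K₂(b,a). Let q₂ ∈ ℝ∖{0}. Let d ∈ ℂ^g and T, L ∈ ℤ^g satisfy conj(d) = −d − iπ·diag(H) + 2πiT + BL (so that d = (1/2)Re(B)L + i·d_I for some d_I ∈ ℝ^g and 2T + HL = diag(H)). Put ρ = −sign(q₂)·exp(−iπ⟨N,L⟩) (which equals ±1), |A| = |κ₁|·|q₂|^{1/2}·exp(−(1/2)⟨Re(r),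 L⟩), and A = |A|e^{iθ} for some θ ∈ ℝ. Define Z(ξ,η,t) = i(κ₁V_aξ − κ₂V_bη + (κ₁²W_a − κ₂²W_b)t/2), G₁ = κ₁K₁(a,b), G₂ = κ₂K₁(b,a), G₃ = κ₁²K₂(a,b) + κ₂²K₂(b,a) + h, ψ = A·Θ(Z−d+r)/Θ(Z−d)·exp(i(−G₁ξ − G₂η + G₃t/2)), ψ* = −(κ₁κ₂q₂/A)·Θ(Z−d−r)/Θ(Z−d)·exp(i(G₁ξ + G₂η − G₃t/2)). Then for every ξ ∈ ℂ, η = conj(ξ) and t ∈ ℝ with Θ(Z(ξ,η,t)−d) ≠ 0, the DS2 reality condition holds: ψ*(ξ,η,t) = ρ·conj(ψ(ξ,η,t)). -/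
/-!
Θ is even, `2πiℤ^g`-periodic and quasi-periodic under `z ↦ z + B L`. Since `conj B = B - 2πi H`
with `H` symmetric and integral, and `mᵀ H m ≡ Σ Hᵢᵢ mᵢ (mod 2)`, conjugation acts by
`conj Θ(z) = Θ(conj z - iπ diag H)`. For `η = conj ξ` and real `t` the vector `Z` is purely
imaginary, so for `s ∈ {0, r}` the conditions on `d` and `r` give
`conj (Z - d + s) - iπ diag H ≡ -(Z - d - s + B L) (mod 2πiℤ^g)`, whence
`conj Θ(Z - d + s) = exp(-½⟨BL, L⟩ - ⟨L, Z - d - s⟩) Θ(Z - d - s)`. The two factors differ by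
`exp ⟨L, r⟩`, and the claim reduces to `ρ |A|² exp ⟨L, r⟩ = -κ₁ κ₂ q₂`: this is how `|A|` and `ρ`
are normalised, `Re ⟨L, r⟩` and `Im ⟨L, r⟩ = π⟨N, L⟩` each cancelling one factor.
-/

open Complex ComplexConjugate

noncomputable section

open Matrix
open scoped Real

theorem CharTwo.sum_sum_eq_sum_diag {R n : Type*} [CommRing R] [CharP R 2] [Fintype n]
    [DecidableEq n] (a : n → n → R) (ha : ∀ i j, a i j = a j i) :
    ∑ i, ∑ j, a i j = ∑ i, a i i := by
  have hoff : ∑ p : n × n, (if p.1 = p.2 then 0 else a p.1 p.2) = 0 :=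
    Finset.sum_ninvolution Prod.swap
      (fun p => by by_cases hp : p.1 = p.2 <;> simp [hp, eq_comm, ha p.2 p.1])
      (fun p hp h => hp (by simp_all [Prod.ext_iff])) (fun _ => Finset.mem_univ _)
      Prod.swap_swap
  calc ∑ i, ∑ j, a i j
      = ∑ p : n × n,
          ((if p.1 = p.2 then 0 else a p.1 p.2) + if p.1 = p.2 then a p.1 p.2 else 0) := by
        rw [← Finset.univ_product_univ, Finset.sum_product]
        exact Finset.sum_congr rfl fun i _ => Finset.sum_congr rfl fun j _ => by split_ifs <;> simp
    _ = ∑ i, a i i := by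
        rw [Finset.sum_add_distrib, hoff, zero_add, ← Finset.univ_product_univ, Finset.sum_product]
        simp

theorem Matrix.IsSymm.even_mulVec_dotProduct_sub_diag {n : Type*} [Fintype n] [DecidableEq n]
    {H : Matrix n n ℤ} (hH : H.IsSymm) (m : n → ℤ) :
    Even ((H *ᵥ m) ⬝ᵥ m - ∑ i, H i i * m i) := by
  have hidem : ∀ x : ZMod 2, x * x = x := by decide
  rw [← ZMod.intCast_eq_zero_iff_even, Int.cast_sub, sub_eq_zero]
  simp only [mulVec, dotProduct, Int.cast_sum, Int.cast_mul, Finset.sum_mul]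
  rw [CharTwo.sum_sum_eq_sum_diag]
  · simp only [mul_assoc, hidem]
  · intro i j
    rw [hH.apply i j]
    ring

variable {g : ℕ}

lemma pairC_eq_dotProduct (u v : Fin g → ℂ) : pairC u v = u ⬝ᵥ v := rfl

lemma theta_neg (B : Matrix (Fin g) (Fin g) ℂ) (z : Fin g → ℂ) :
    theta B (-z) = theta B z := by
  rw [theta, theta]
  conv_rhs => rw [← (Equiv.neg (Fin g → ℤ)).tsum_eq]
  refine tsum_congr fun m => ?_
  have hneg : (fun i => (((Equiv.neg _) m i : ℤ) : ℂ)) = -fun i => (m i : ℂ) := by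
    ext i; simp
  simp only [hneg, pairC_eq_dotProduct, mulVec_neg, neg_dotProduct, dotProduct_neg, neg_neg]

lemma theta_add_two_pi_I_mul_int (B : Matrix (Fin g) (Fin g) ℂ) (z : Fin g → ℂ)
    (k : Fin g → ℤ) :
    theta B (z + fun i => 2 * π * I * k i) = theta B z := by
  refine tsum_congr fun m => ?_
  have hshift : pairC (fun i => (m i : ℂ)) (z + fun i => 2 * π * I * k i)
      = pairC (fun i => (m i : ℂ)) z + ((∑ i, m i * k i : ℤ) : ℂ) * (2 * π * I) := by
    simp only [pairC, Pi.add_apply, mul_add, Finset.sum_add_distrib]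
    push_cast
    rw [Finset.sum_mul]
    exact congrArg _ (Finset.sum_congr rfl fun i _ => by ring)
  rw [hshift, ← add_assoc, exp_add, exp_int_mul_two_pi_mul_I, mul_one]

lemma theta_add_mulVec_int {B : Matrix (Fin g) (Fin g) ℂ} (hB : B.IsSymm) (z : Fin g → ℂ)
    (L : Fin g → ℤ) :
    theta B (z + B *ᵥ fun i => (L i : ℂ))
      = exp (-(1 / 2) * pairC (B *ᵥ fun i => (L i : ℂ)) (fun i => (L i : ℂ))
          - pairC (fun i => (L i : ℂ)) z) * theta B z := by
  rw [theta, theta, ← tsum_mul_left]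
  conv_rhs => rw [← (Equiv.addRight L).tsum_eq]
  refine tsum_congr fun m => ?_
  have hsymm : ∀ u v : Fin g → ℂ, (B *ᵥ u) ⬝ᵥ v = (B *ᵥ v) ⬝ᵥ u := fun u v => by
    rw [dotProduct_comm, dotProduct_mulVec, ← vecMul_transpose, hB.eq]
  rw [← exp_add]
  congr 1
  simp only [pairC_eq_dotProduct, Equiv.coe_addRight, Pi.add_apply, Int.cast_add]
  rw [show (fun i => (m i : ℂ) + L i) = (fun i => (m i : ℂ)) + fun i => (L i : ℂ) from rfl]
  simp only [mulVec_add, add_dotProduct, dotProduct_add, hsymm (fun i => (L i : ℂ)),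
    dotProduct_comm (fun i => (m i : ℂ)) (B *ᵥ _)]
  ring

lemma conj_pairC_mulVec_intCast {B : Matrix (Fin g) (Fin g) ℂ} {H : Matrix (Fin g) (Fin g) ℤ}
    (hBH : ∀ i j, conj (B i j) = B i j - 2 * π * I * H i j) (m : Fin g → ℤ) :
    conj (pairC (B *ᵥ fun i => (m i : ℂ)) fun i => (m i : ℂ))
      = pairC (B *ᵥ fun i => (m i : ℂ)) (fun i => (m i : ℂ))
        - 2 * π * I * (((H *ᵥ m) ⬝ᵥ m : ℤ) : ℂ) := by
  simp only [pairC, mulVec, dotProduct, map_sum, map_mul, map_intCast, hBH, Int.cast_sum,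
    Int.cast_mul, Finset.sum_mul, Finset.mul_sum, ← Finset.sum_sub_distrib]
  exact Finset.sum_congr rfl fun i _ => Finset.sum_congr rfl fun j _ => by ring

lemma conj_theta {B : Matrix (Fin g) (Fin g) ℂ} {H : Matrix (Fin g) (Fin g) ℤ} (hH : H.IsSymm)
    (hBH : ∀ i j, conj (B i j) = B i j - 2 * π * I * H i j) (z : Fin g → ℂ) :
    conj (theta B z) = theta B fun i => conj (z i) - π * I * H i i := by
  rw [theta, theta, starRingEnd_apply, tsum_star]
  refine tsum_congr fun m => ?_
  obtain ⟨c, hc⟩ := hH.even_mulVec_dotProduct_sub_diag m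
  have hdiag : pairC (fun i => (m i : ℂ)) (fun i => conj (z i) - π * I * H i i)
      = conj (pairC (fun i => (m i : ℂ)) z) - π * I * ((∑ i, H i i * m i : ℤ) : ℂ) := by
    simp only [pairC, map_sum, map_mul, map_intCast, mul_sub, Finset.sum_sub_distrib]
    push_cast
    rw [Finset.mul_sum]
    exact congrArg _ (Finset.sum_congr rfl fun i _ => by ring)
  have hquad : (((H *ᵥ m) ⬝ᵥ m : ℤ) : ℂ) = ((∑ i, H i i * m i : ℤ) : ℂ) + 2 * c := by
    exact_mod_cast (by omega : (H *ᵥ m) ⬝ᵥ m = ∑ i, H i i * m i + 2 * c)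
  have hexponent :
      conj (1 / 2 * pairC (B *ᵥ fun i => (m i : ℂ)) (fun i => (m i : ℂ))
        + pairC (fun i => (m i : ℂ)) z)
      = 1 / 2 * pairC (B *ᵥ fun i => (m i : ℂ)) (fun i => (m i : ℂ))
        + pairC (fun i => (m i : ℂ)) (fun i => conj (z i) - π * I * H i i)
        + ((-c : ℤ) : ℂ) * (2 * π * I) := by
    rw [map_add, map_mul, conj_pairC_mulVec_intCast hBH, hdiag, hquad, map_div₀, map_one,
      map_ofNat]
    push_cast
    ring
  rw [← starRingEnd_apply, ← exp_conj, hexponent, exp_add, exp_int_mul_two_pi_mul_I, mul_one]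

lemma conj_theta_eq_exp_mul_theta {B : Matrix (Fin g) (Fin g) ℂ} {H : Matrix (Fin g) (Fin g) ℤ}
    (hB : B.IsSymm) (hH : H.IsSymm) (hBH : ∀ i j, conj (B i j) = B i j - 2 * π * I * H i j)
    {u v : Fin g → ℂ} (L k : Fin g → ℤ)
    (huv : ∀ i, conj (u i) - π * I * H i i
      = -(v i + (B *ᵥ fun j => (L j : ℂ)) i) + 2 * π * I * k i) :
    conj (theta B u) = exp (-(1 / 2) * pairC (B *ᵥ fun j => (L j : ℂ)) (fun j => (L j : ℂ))
      - pairC (fun j => (L j : ℂ)) v) * theta B v := by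
  have hu : (fun i => conj (u i) - π * I * H i i)
      = -(v + B *ᵥ fun j => (L j : ℂ)) + fun i => 2 * π * I * k i := funext huv
  rw [conj_theta hH hBH, hu, theta_add_two_pi_I_mul_int, theta_neg, theta_add_mulVec_int hB]

lemma neg_sign_mul_exp_eq_one_or_eq_neg_one {q : ℝ} (hq : q ≠ 0) (n : ℤ) :
    -((q / |q| : ℝ) : ℂ) * exp (-(π * I) * n) = 1 ∨
      -((q / |q| : ℝ) : ℂ) * exp (-(π * I) * n) = -1 := by
  have hsign : ((q / |q| : ℝ) : ℂ) * ((q / |q| : ℝ) : ℂ) = 1 := by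
    rw [← ofReal_mul, div_mul_div_comm, abs_mul_abs_self, div_self (mul_ne_zero hq hq), ofReal_one]
  have hexp : exp (-(π * I) * n) * exp (-(π * I) * n) = 1 := by
    rw [← exp_add, show -(π * I) * n + -(π * I) * n = ((-n : ℤ) : ℂ) * (2 * π * I) by
      push_cast; ring, exp_int_mul_two_pi_mul_I]
  rw [← mul_self_eq_one_iff, neg_mul, neg_mul_neg, mul_mul_mul_comm, hsign, hexp, one_mul]

lemma eq_re_add_pi_I_mul_of_conj_eq {z : ℂ} {n : ℤ} (h : conj z = z - 2 * π * I * n) :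
    z = z.re + π * I * n := by
  have him : -z.im = z.im - 2 * π * n := by simpa using congrArg im h
  exact Complex.ext (by simp) (by simp; linarith)

lemma pairC_intCast_eq_of_conj_eq {r : Fin g → ℂ} {N : Fin g → ℤ}
    (hr : ∀ i, conj (r i) = r i - 2 * π * I * N i) (L : Fin g → ℤ) :
    pairC (fun i => (L i : ℂ)) r
      = ((∑ i, (r i).re * L i : ℝ) : ℂ) + π * I * (∑ i, N i * L i : ℤ) := by
  simp only [pairC]
  push_cast
  rw [Finset.mul_sum, ← Finset.sum_add_distrib]
  exact Finset.sum_congr rfl fun i _ => by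
    linear_combination (L i : ℂ) * eq_re_add_pi_I_mul_of_conj_eq (hr i)

lemma rho_mul_conj_mul_exp_pairC {κ : ℂ} (hκ : κ ≠ 0) {q : ℝ} (hq : q ≠ 0) {r : Fin g → ℂ}
    {N : Fin g → ℤ} (hr : ∀ i, conj (r i) = r i - 2 * π * I * N i) (L : Fin g → ℤ)
    {ρ : ℂ} (hρ : ρ = -((q / |q| : ℝ) : ℂ) * exp (-(π * I) * (∑ i, N i * L i : ℤ)))
    {Aabs : ℝ} (hAabs : Aabs = ‖κ‖ * √|q| * Real.exp (-(1 / 2) * ∑ i, (r i).re * L i))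
    {θ : ℝ} {A : ℂ} (hA : A = Aabs * exp (I * θ)) :
    ρ * conj A * exp (pairC (fun i => (L i : ℂ)) r) = -(κ * conj κ * q / A) := by
  set s := ∑ i, (r i).re * L i
  set n := ∑ i, N i * L i
  have hAabs_sq : Aabs ^ 2 = ‖κ‖ ^ 2 * |q| * Real.exp (-s) := by
    rw [hAabs, mul_pow, mul_pow, Real.sq_sqrt (abs_nonneg q), ← Real.exp_nat_mul]
    ring_nf
  have hA0 : A ≠ 0 := by
    rw [hA, hAabs]
    exact mul_ne_zero (ofReal_ne_zero.mpr (by positivity)) (exp_ne_zero _)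
  have hAA : A * conj A = ((Aabs ^ 2 : ℝ) : ℂ) := by
    rw [mul_conj, normSq_eq_norm_sq, hA, norm_mul, norm_real, mul_comm I, norm_exp_ofReal_mul_I,
      mul_one, Real.norm_eq_abs, sq_abs]
  have hpair : pairC (fun i => (L i : ℂ)) r = s + π * I * n := pairC_intCast_eq_of_conj_eq hr L
  have hphase : exp (-(π * I) * n) = (exp (π * I * n))⁻¹ := by rw [neg_mul, Complex.exp_neg]
  have habs : ((|q| : ℝ) : ℂ) ≠ 0 := ofReal_ne_zero.mpr (abs_ne_zero.mpr hq)
  have hnorm : ρ * (A * conj A) * exp (pairC (fun i => (L i : ℂ)) r) = -(κ * conj κ * q) := by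
    rw [hρ, hAA, hAabs_sq, hpair, hphase, mul_conj, normSq_eq_norm_sq, exp_add, ofReal_mul,
      ofReal_exp, ofReal_neg, Complex.exp_neg]
    push_cast
    field_simp
  rw [← neg_div, eq_div_iff hA0, ← hnorm]
  ring

lemma conj_DS2_phase_eq_neg {κ₁ κ₂ a b c e : ℂ} (hκ : κ₂ = conj κ₁) (hab : conj a = -b)
    (hce : conj c = -e) (ξ : ℂ) (t : ℝ) :
    conj (I * (κ₁ * a * ξ - κ₂ * b * conj ξ + (κ₁ ^ 2 * c - κ₂ ^ 2 * e) * t / 2))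
      = -(I * (κ₁ * a * ξ - κ₂ * b * conj ξ + (κ₁ ^ 2 * c - κ₂ ^ 2 * e) * t / 2)) := by
  have hba : conj b = -a := by rw [← neg_neg b, ← hab, map_neg, conj_conj]
  have hec : conj e = -c := by rw [← neg_neg e, ← hce, map_neg, conj_conj]
  simp only [map_mul, map_add, map_sub, map_div₀, map_pow, conj_I, conj_conj, conj_ofReal,
    map_ofNat, hab, hba, hce, hec, hκ]
  ring

lemma conj_DS2_exponent {κ₁ κ₂ K1ab K2ab K1ba K2ba G₁ G₂ G₃ : ℂ} {h : ℝ}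
    (hκ₂ : κ₂ = conj κ₁) (hK1 : conj K1ab = K1ba) (hK2 : conj K2ab = K2ba)
    (hG₁ : G₁ = κ₁ * K1ab) (hG₂ : G₂ = κ₂ * K1ba) (hG₃ : G₃ = κ₁ ^ 2 * K2ab + κ₂ ^ 2 * K2ba + h)
    (ξ : ℂ) (t : ℝ) :
    conj (I * (-(G₁ * ξ) - G₂ * conj ξ + G₃ * t / 2))
      = I * (G₁ * ξ + G₂ * conj ξ - G₃ * t / 2) := by
  subst hκ₂ hK1 hK2 hG₁ hG₂ hG₃
  simp only [map_mul, map_add, map_sub, map_neg, map_div₀, map_pow, conj_I, conj_conj,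
    conj_ofReal, map_ofNat]
  ring

theorem stmt_14_general {g : ℕ} (B : Matrix (Fin g) (Fin g) ℂ)
    (hBsymm : B.IsSymm)
    (H : Matrix (Fin g) (Fin g) ℤ) (hHsymm : H.IsSymm)
    (hBH : ∀ i j, conj (B i j) = B i j - 2 * (Real.pi : ℂ) * I * (H i j : ℂ))
    (Va Wa Vb Wb : Fin g → ℂ)
    (hVab : ∀ i, conj (Va i) = -Vb i) (hWab : ∀ i, conj (Wa i) = -Wb i)
    (r : Fin g → ℂ) (N : Fin g → ℤ)
    (hr : ∀ i, conj (r i) = r i - 2 * (Real.pi : ℂ) * I * (N i : ℂ))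
    (κ₁ κ₂ : ℂ) (hκ₁ : κ₁ ≠ 0) (hκ₂ : κ₂ = conj κ₁) (h : ℝ)
    (K1ab K2ab K1ba K2ba : ℂ)
    (hK1 : conj K1ab = K1ba) (hK2 : conj K2ab = K2ba)
    (q₂ : ℝ) (hq₂ : q₂ ≠ 0)
    (d : Fin g → ℂ) (T L : Fin g → ℤ)
    (hd : ∀ i, conj (d i)
      = -d i - (Real.pi : ℂ) * I * (H i i : ℂ) + 2 * (Real.pi : ℂ) * I * (T i : ℂ)
        + B.mulVec (fun j => (L j : ℂ)) i)
    (ρ : ℂ)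
    (hρ : ρ = -(((q₂ / |q₂| : ℝ)) : ℂ) *
      Complex.exp (-((Real.pi : ℂ) * I) * ((∑ i, N i * L i : ℤ) : ℂ)))
    (Aabs : ℝ)
    (hAabs : Aabs = ‖κ₁‖ * Real.sqrt |q₂| *
      Real.exp (-(1 / 2) * ∑ i, (r i).re * (L i : ℝ)))
    (θ : ℝ) (A : ℂ) (hA : A = (Aabs : ℂ) * Complex.exp (I * (θ : ℂ)))
    (Z : ℂ → ℂ → ℝ → Fin g → ℂ)
    (hZ : ∀ (ξ η : ℂ) (t : ℝ), Z ξ η t = fun i =>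
      I * (κ₁ * Va i * ξ - κ₂ * Vb i * η
        + (κ₁ ^ 2 * Wa i - κ₂ ^ 2 * Wb i) * (t : ℂ) / 2))
    (G₁ G₂ G₃ : ℂ) (hG₁ : G₁ = κ₁ * K1ab) (hG₂ : G₂ = κ₂ * K1ba)
    (hG₃ : G₃ = κ₁ ^ 2 * K2ab + κ₂ ^ 2 * K2ba + (h : ℂ))
    (ψ ψs : ℂ → ℂ → ℝ → ℂ)
    (hψ : ∀ (ξ η : ℂ) (t : ℝ), ψ ξ η t =
      A * theta B (Z ξ η t - d + r) / theta B (Z ξ η t - d) *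
        Complex.exp (I * (-(G₁ * ξ) - G₂ * η + G₃ * (t : ℂ) / 2)))
    (hψs : ∀ (ξ η : ℂ) (t : ℝ), ψs ξ η t =
      -(κ₁ * κ₂ * (q₂ : ℂ) / A) * theta B (Z ξ η t - d - r) / theta B (Z ξ η t - d) *
        Complex.exp (I * (G₁ * ξ + G₂ * η - G₃ * (t : ℂ) / 2))) :
    (ρ = 1 ∨ ρ = -1) ∧
    (∀ (ξ : ℂ) (t : ℝ), theta B (Z ξ (conj ξ) t - d) ≠ 0 →
      ψs ξ (conj ξ) t = ρ * conj (ψ ξ (conj ξ) t)) := by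
  refine ⟨hρ ▸ neg_sign_mul_exp_eq_one_or_eq_neg_one hq₂ _, fun ξ t _ => ?_⟩
  rw [hψs, hψ]
  set z := Z ξ (conj ξ) t
  have hz : ∀ i, conj (z i) = -z i := fun i => by
    simp only [z, hZ]
    exact conj_DS2_phase_eq_neg hκ₂ (hVab i) (hWab i) ξ t
  have hθ := conj_theta_eq_exp_mul_theta (u := z - d) (v := z - d) hBsymm hHsymm hBH L (-T)
    fun i => by
      simp only [Pi.sub_apply, map_sub, hz, hd, Pi.neg_apply, Int.cast_neg]
      ring
  have hθr := conj_theta_eq_exp_mul_theta (u := z - d + r) (v := z - d - r) hBsymm hHsymm hBH L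
    (-(T + N)) fun i => by
      simp only [Pi.sub_apply, Pi.add_apply, map_add, map_sub, hz, hd, hr, Pi.neg_apply,
        Int.cast_neg, Int.cast_add]
      ring
  have hpair_sub : pairC (fun j => (L j : ℂ)) (z - d - r)
      = pairC (fun j => (L j : ℂ)) (z - d) - pairC (fun j => (L j : ℂ)) r := by
    simp only [pairC_eq_dotProduct, dotProduct_sub]
  rw [map_mul, map_div₀, map_mul, hθ, hθr, ← exp_conj,
    conj_DS2_exponent hκ₂ hK1 hK2 hG₁ hG₂ hG₃, hκ₂,
    ← rho_mul_conj_mul_exp_pairC hκ₁ hq₂ hr L hρ hAabs hA, hpair_sub, ← sub_add, exp_add]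
  field_simp

/-- reality condition `ψ* = ρ conj(ψ)` (with `ρ = ±1`) for the
theta-functional solutions of the DS2 equation, on `η = conj(ξ)`, `t ∈ ℝ`. -/
theorem stmt_14 {g : ℕ} (hg : 1 ≤ g) (B : Matrix (Fin g) (Fin g) ℂ)
    (hBsymm : B.IsSymm)
    (hBneg : ∀ x : Fin g → ℝ, x ≠ 0 → ∑ i, ∑ j, (B i j).re * x i * x j < 0)
    (H : Matrix (Fin g) (Fin g) ℤ) (hHsymm : H.IsSymm)
    (hBH : ∀ i j, conj (B i j) = B i j - 2 * (Real.pi : ℂ) * I * (H i j : ℂ))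
    (Va Wa Vb Wb : Fin g → ℂ)
    (hVab : ∀ i, conj (Va i) = -Vb i) (hWab : ∀ i, conj (Wa i) = -Wb i)
    (r : Fin g → ℂ) (N : Fin g → ℤ)
    (hr : ∀ i, conj (r i) = r i - 2 * (Real.pi : ℂ) * I * (N i : ℂ))
    (κ₁ κ₂ : ℂ) (hκ₁ : κ₁ ≠ 0) (hκ₂ : κ₂ = conj κ₁) (h : ℝ)
    (K1ab K2ab K1ba K2ba : ℂ)
    (hK1 : conj K1ab = K1ba) (hK2 : conj K2ab = K2ba)
    (q₂ : ℝ) (hq₂ : q₂ ≠ 0)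
    (d : Fin g → ℂ) (T L : Fin g → ℤ)
    (hd : ∀ i, conj (d i)
      = -d i - (Real.pi : ℂ) * I * (H i i : ℂ) + 2 * (Real.pi : ℂ) * I * (T i : ℂ)
        + B.mulVec (fun j => (L j : ℂ)) i)
    (ρ : ℂ)
    (hρ : ρ = -(((q₂ / |q₂| : ℝ)) : ℂ) *
      Complex.exp (-((Real.pi : ℂ) * I) * ((∑ i, N i * L i : ℤ) : ℂ)))
    (Aabs : ℝ)
    (hAabs : Aabs = ‖κ₁‖ * Real.sqrt |q₂| *
      Real.exp (-(1 / 2) * ∑ i, (r i).re * (L i : ℝ)))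
    (θ : ℝ) (A : ℂ) (hA : A = (Aabs : ℂ) * Complex.exp (I * (θ : ℂ)))
    (Z : ℂ → ℂ → ℝ → Fin g → ℂ)
    (hZ : ∀ (ξ η : ℂ) (t : ℝ), Z ξ η t = fun i =>
      I * (κ₁ * Va i * ξ - κ₂ * Vb i * η
        + (κ₁ ^ 2 * Wa i - κ₂ ^ 2 * Wb i) * (t : ℂ) / 2))
    (G₁ G₂ G₃ : ℂ) (hG₁ : G₁ = κ₁ * K1ab) (hG₂ : G₂ = κ₂ * K1ba)
    (hG₃ : G₃ = κ₁ ^ 2 * K2ab + κ₂ ^ 2 * K2ba + (h : ℂ))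
    (ψ ψs : ℂ → ℂ → ℝ → ℂ)
    (hψ : ∀ (ξ η : ℂ) (t : ℝ), ψ ξ η t =
      A * theta B (Z ξ η t - d + r) / theta B (Z ξ η t - d) *
        Complex.exp (I * (-(G₁ * ξ) - G₂ * η + G₃ * (t : ℂ) / 2)))
    (hψs : ∀ (ξ η : ℂ) (t : ℝ), ψs ξ η t =
      -(κ₁ * κ₂ * (q₂ : ℂ) / A) * theta B (Z ξ η t - d - r) / theta B (Z ξ η t - d) *
        Complex.exp (I * (G₁ * ξ + G₂ * η - G₃ * (t : ℂ) / 2))) :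
    (ρ = 1 ∨ ρ = -1) ∧
    (∀ (ξ : ℂ) (t : ℝ), theta B (Z ξ (conj ξ) t - d) ≠ 0 →
      ψs ξ (conj ξ) t = ρ * conj (ψ ξ (conj ξ) t)) :=
  stmt_14_general B hBsymm H hHsymm hBH Va Wa Vb Wb hVab hWab r N hr κ₁ κ₂ hκ₁ hκ₂ h K1ab K2ab K1ba
    K2ba hK1 hK2 q₂ hq₂ d T L hd ρ hρ Aabs hAabs θ A hA Z hZ G₁ G₂ G₃ hG₁ hG₂ hG₃ ψ ψs hψ hψs
end
end

section
/- Let ψ, ψ*, φ : ℂ³ → ℂ be holomorphic functions satisfying the complexified Davey–Stewartson system iψ_t + (1/2)(ψ_{ξξ} + ψ_{ηη}) + 2φψ = 0, −iψ*_t + (1/2)(ψ*_{ξξ} + ψ*_{ηη}) + 2φψ* = 0, φ_{ξη} + (1/2)((ψψ*)_{ξξ} + (ψψ*)_{ηη}) = 0 on ℂ³ (subscripts denote complex partial derivatives in the variables (ξ,η,t)). For any β ∈ ℂ∖{0} and λ₁, λ₂, α ∈ ℂ, define ψ̃(ξ,η,t) = ψ(βξ + βλ₁t, βη + βλ₂t,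 β²t)·exp(−i(λ₁ξ + λ₂η + (λ₁² + λ₂² − α)t/2)), ψ̃*(ξ,η,t) = β²·ψ*(βξ + βλ₁t, βη + βλ₂t, β²t)·exp(i(λ₁ξ + λ₂η + (λ₁² + λ₂² − α)t/2)), and φ̃(ξ,η,t) = β²·φ(βξ + βλ₁t, βη + βλ₂t, β²t) + α/4. Then ψ̃, ψ̃*, φ̃ satisfy the same complexified Davey–Stewartson system on ℂ³. -/
open Complex

/-!
The substitution is the Galilean boost `(ξ, η) ↦ (ξ + λ₁ t, η + λ₂ t)`, followed by the scaling
`(ξ, η, t) ↦ (βξ, βη, β²t)` and multiplication by the plane wave `exp (∓ i θ)`,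
`θ = λ₁ξ + λ₂η + (λ₁² + λ₂² - α) t / 2`. Write the first two equations as
`ε ∂ₜu + ½ (∂ξ²u + ∂η²u) + 2φu = 0` with `ε = ±i`. By the chain rule the transformed left-hand
side is `β²` times the original one at the transformed point, times the plane wave, plus terms
produced by the plane wave: its first-order cross terms cancel between `ε ∂ₜ` and `½ (∂ξ² + ∂η²)`,
and the remaining zeroth-order term `(ε² + 1) α / 2 · u` vanishes; this is what the shift of `φ`
by `α / 4` is for. In the third equation the plane waves cancel in `ψ̃ ψ̃*`, leaving a factor `β⁴`.
-/

section Calculus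

variable {𝕜 : Type*} [NontriviallyNormedField 𝕜]

theorem hasDerivAt_of_eq_add_mul {f : 𝕜 → 𝕜} {c : 𝕜} (hf : ∀ y, f y = f 0 + c * y) (x : 𝕜) :
    HasDerivAt f c x := by
  rw [funext hf]
  simpa using ((hasDerivAt_id' x).const_mul c).const_add (f 0)

theorem deriv_const_mul_comp_mul_add (κ b k : 𝕜) (f : 𝕜 → 𝕜) (x : 𝕜) :
    deriv (fun y => κ * f (b * y + k)) x = κ * b * deriv f (b * x + k) := by
  rw [deriv_const_mul_field', mul_assoc]
  have h := deriv_comp_mul_left b (fun z => f (z + k)) x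
  rw [deriv_comp_add_const, smul_eq_mul] at h
  exact congrArg (κ * ·) h

theorem deriv_deriv_const_mul_comp_mul_add (κ b k : 𝕜) (f : 𝕜 → 𝕜) (x : 𝕜) :
    deriv (fun y' => deriv (fun y => κ * f (b * y + k)) y') x
      = κ * b ^ 2 * deriv (deriv f) (b * x + k) := by
  simp only [deriv_const_mul_comp_mul_add κ b k f, deriv_const_mul_comp_mul_add (κ * b) b k]
  ring

theorem hasDerivAt_uncurry3_comp {u : 𝕜 → 𝕜 → 𝕜 → 𝕜} {x₁ x₂ x₃ : 𝕜 → 𝕜} {x₁' x₂' x₃' s : 𝕜}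
    (hu : DifferentiableAt 𝕜 (fun p : 𝕜 × 𝕜 × 𝕜 => u p.1 p.2.1 p.2.2) (x₁ s, x₂ s, x₃ s))
    (h₁ : HasDerivAt x₁ x₁' s) (h₂ : HasDerivAt x₂ x₂' s) (h₃ : HasDerivAt x₃ x₃' s) :
    HasDerivAt (fun s => u (x₁ s) (x₂ s) (x₃ s))
      (x₁' * deriv (fun z => u z (x₂ s) (x₃ s)) (x₁ s)
        + x₂' * deriv (fun z => u (x₁ s) z (x₃ s)) (x₂ s)
        + x₃' * deriv (fun z => u (x₁ s) (x₂ s) z) (x₃ s)) s := by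
  set L := fderiv 𝕜 (fun p : 𝕜 × 𝕜 × 𝕜 => u p.1 p.2.1 p.2.2) (x₁ s, x₂ s, x₃ s)
  have hL := hu.hasFDerivAt
  have c₁ : HasDerivAt (fun z : 𝕜 => (z, x₂ s, x₃ s)) (1, 0, 0) (x₁ s) :=
    (hasDerivAt_id' _).prodMk ((hasDerivAt_const _ _).prodMk (hasDerivAt_const _ _))
  have c₂ : HasDerivAt (fun z : 𝕜 => (x₁ s, z, x₃ s)) (0, 1, 0) (x₂ s) :=
    (hasDerivAt_const _ _).prodMk ((hasDerivAt_id' _).prodMk (hasDerivAt_const _ _))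
  have c₃ : HasDerivAt (fun z : 𝕜 => (x₁ s, x₂ s, z)) (0, 0, 1) (x₃ s) :=
    (hasDerivAt_const _ _).prodMk ((hasDerivAt_const _ _).prodMk (hasDerivAt_id' _))
  have e₁ : deriv (fun z => u z (x₂ s) (x₃ s)) (x₁ s) = L (1, 0, 0) :=
    (hL.comp_hasDerivAt (x₁ s) c₁ :).deriv
  have e₂ : deriv (fun z => u (x₁ s) z (x₃ s)) (x₂ s) = L (0, 1, 0) :=
    (hL.comp_hasDerivAt (x₂ s) c₂ :).deriv
  have e₃ : deriv (fun z => u (x₁ s) (x₂ s) z) (x₃ s) = L (0, 0, 1) :=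
    (hL.comp_hasDerivAt (x₃ s) c₃ :).deriv
  have hv : ((x₁', x₂', x₃') : 𝕜 × 𝕜 × 𝕜)
      = x₁' • ((1, 0, 0) : 𝕜 × 𝕜 × 𝕜) + x₂' • (0, 1, 0) + x₃' • (0, 0, 1) := by
    simp
  have h := hL.comp_hasDerivAt s (h₁.prodMk (h₂.prodMk h₃))
  rwa [hv, map_add, map_add, map_smul, map_smul, map_smul, ← e₁, ← e₂, ← e₃] at h

end Calculus

theorem deriv_mul_cexp {v g : ℂ → ℂ} {c x : ℂ} (hv : DifferentiableAt ℂ v x)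
    (hg : HasDerivAt g c x) :
    deriv (fun y => v y * exp (g y)) x = (deriv v x + c * v x) * exp (g x) :=
  (hv.hasDerivAt.mul hg.cexp).deriv.trans (by ring)

theorem deriv_deriv_mul_cexp {v g : ℂ → ℂ} {c : ℂ} (hv : Differentiable ℂ v)
    (hg : ∀ y, HasDerivAt g c y) (x : ℂ) :
    deriv (fun y' => deriv (fun y => v y * exp (g y)) y') x
      = (deriv (deriv v) x + 2 * c * deriv v x + c ^ 2 * v x) * exp (g x) := by
  have h₁ : ∀ y, deriv (fun y => v y * exp (g y)) y = (deriv v y + c * v y) * exp (g y) :=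
    fun y => deriv_mul_cexp (hv y) (hg y)
  have h₂ : deriv (fun y => deriv v y + c * v y) x = deriv (deriv v) x + c * deriv v x :=
    ((hv.deriv x).hasDerivAt.add ((hv x).hasDerivAt.const_mul c)).deriv
  simp only [h₁]
  rw [deriv_mul_cexp (v := fun y => deriv v y + c * v y) ((hv.deriv x).add ((hv x).const_mul c))
    (hg x), h₂]
  ring

theorem deriv_deriv_const_mul_comp_mul_add_mul_cexp {f g : ℂ → ℂ} {c : ℂ}
    (hf : Differentiable ℂ f) (hg : ∀ y, HasDerivAt g c y) (κ b k x : ℂ) :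
    deriv (fun y' => deriv (fun y => κ * f (b * y + k) * exp (g y)) y') x
      = κ * (b ^ 2 * deriv (deriv f) (b * x + k) + 2 * b * c * deriv f (b * x + k)
        + c ^ 2 * f (b * x + k)) * exp (g x) := by
  rw [deriv_deriv_mul_cexp (v := fun y => κ * f (b * y + k)) ((hf.comp (by fun_prop)).const_mul κ)
    hg, deriv_deriv_const_mul_comp_mul_add, deriv_const_mul_comp_mul_add]
  ring

noncomputable def schrodingerOp (ε : ℂ) (u φ : ℂ → ℂ → ℂ → ℂ) (ξ η t : ℂ) : ℂ :=
  ε * deriv (fun t' : ℂ => u ξ η t') t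
    + (1 / 2) * (deriv (fun ξ' : ℂ => deriv (fun ξ'' : ℂ => u ξ'' η t) ξ') ξ
      + deriv (fun η' : ℂ => deriv (fun η'' : ℂ => u ξ η'' t) η') η)
    + 2 * φ ξ η t * u ξ η t

noncomputable def potentialOp (ρ φ : ℂ → ℂ → ℂ → ℂ) (ξ η t : ℂ) : ℂ :=
  deriv (fun ξ' : ℂ => deriv (fun η' : ℂ => φ ξ' η' t) η) ξ
    + (1 / 2) * (deriv (fun ξ' : ℂ => deriv (fun ξ'' : ℂ => ρ ξ'' η t) ξ') ξ
      + deriv (fun η' : ℂ => deriv (fun η'' : ℂ => ρ ξ η'' t) η') η)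

theorem schrodingerOp_transform_eq_zero {ε : ℂ} (hε : ε ^ 2 = -1) {u φ ut φt : ℂ → ℂ → ℂ → ℂ}
    (hu : Differentiable ℂ fun p : ℂ × ℂ × ℂ => u p.1 p.2.1 p.2.2)
    (hsys : ∀ ξ η t, schrodingerOp ε u φ ξ η t = 0) (κ β lam₁ lam₂ α : ℂ)
    (hut : ∀ ξ η t, ut ξ η t =
      κ * u (β * ξ + β * lam₁ * t) (β * η + β * lam₂ * t) (β ^ 2 * t) *
        exp (-(ε * (lam₁ * ξ + lam₂ * η + (lam₁ ^ 2 + lam₂ ^ 2 - α) * t / 2))))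
    (hφt : ∀ ξ η t, φt ξ η t =
      β ^ 2 * φ (β * ξ + β * lam₁ * t) (β * η + β * lam₂ * t) (β ^ 2 * t) + α / 4)
    (ξ η t : ℂ) : schrodingerOp ε ut φt ξ η t = 0 := by
  set X := β * ξ + β * lam₁ * t
  set Y := β * η + β * lam₂ * t
  set T := β ^ 2 * t
  set E := exp (-(ε * (lam₁ * ξ + lam₂ * η + (lam₁ ^ 2 + lam₂ ^ 2 - α) * t / 2)))
  have ht : deriv (fun t' => ut ξ η t') t = κ * (β * lam₁ * deriv (fun z => u z Y T) X
      + β * lam₂ * deriv (fun z => u X z T) Y + β ^ 2 * deriv (fun z => u X Y z) T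
      - ε * (lam₁ ^ 2 + lam₂ ^ 2 - α) / 2 * u X Y T) * E := by
    have h₁ : HasDerivAt (fun t' => β * ξ + β * lam₁ * t') (β * lam₁) t :=
      hasDerivAt_of_eq_add_mul (fun _ => by ring) t
    have h₂ : HasDerivAt (fun t' => β * η + β * lam₂ * t') (β * lam₂) t :=
      hasDerivAt_of_eq_add_mul (fun _ => by ring) t
    have h₃ : HasDerivAt (fun t' => β ^ 2 * t') (β ^ 2) t :=
      hasDerivAt_of_eq_add_mul (fun _ => by ring) t
    have hv := (hasDerivAt_uncurry3_comp (hu _) h₁ h₂ h₃).const_mul κ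
    simp only [hut]
    have hθ : HasDerivAt
        (fun t' => -(ε * (lam₁ * ξ + lam₂ * η + (lam₁ ^ 2 + lam₂ ^ 2 - α) * t' / 2)))
        (-(ε * (lam₁ ^ 2 + lam₂ ^ 2 - α) / 2)) t :=
      hasDerivAt_of_eq_add_mul (fun _ => by ring) t
    rw [deriv_mul_cexp hv.differentiableAt hθ, hv.deriv]
    ring
  have hξξ : deriv (fun ξ' => deriv (fun ξ'' => ut ξ'' η t) ξ') ξ
      = κ * (β ^ 2 * deriv (deriv fun z => u z Y T) X
        + 2 * β * (-(ε * lam₁)) * deriv (fun z => u z Y T) X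
        + (-(ε * lam₁)) ^ 2 * u X Y T) * E := by
    simp only [hut]
    exact deriv_deriv_const_mul_comp_mul_add_mul_cexp (f := fun z => u z Y T)
      (hu.comp (by fun_prop : Differentiable ℂ fun z : ℂ => (z, Y, T)))
      (hasDerivAt_of_eq_add_mul fun _ => by ring) κ β (β * lam₁ * t) ξ
  have hηη : deriv (fun η' => deriv (fun η'' => ut ξ η'' t) η') η
      = κ * (β ^ 2 * deriv (deriv fun z => u X z T) Y
        + 2 * β * (-(ε * lam₂)) * deriv (fun z => u X z T) Y
        + (-(ε * lam₂)) ^ 2 * u X Y T) * E := by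
    simp only [hut]
    exact deriv_deriv_const_mul_comp_mul_add_mul_cexp (f := fun z => u X z T)
      (hu.comp (by fun_prop : Differentiable ℂ fun z : ℂ => (X, z, T)))
      (hasDerivAt_of_eq_add_mul fun _ => by ring) κ β (β * lam₂ * t) η
  have h := hsys X Y T
  unfold schrodingerOp at h ⊢
  rw [ht, hξξ, hηη, hut, hφt]
  linear_combination (κ * β ^ 2 * E) * h + (α / 2 * κ * u X Y T * E) * hε

theorem potentialOp_transform_eq_zero {ρ φ ρt φt : ℂ → ℂ → ℂ → ℂ}
    (hsys : ∀ ξ η t, potentialOp ρ φ ξ η t = 0) (β lam₁ lam₂ α : ℂ)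
    (hρt : ∀ ξ η t, ρt ξ η t =
      β ^ 2 * ρ (β * ξ + β * lam₁ * t) (β * η + β * lam₂ * t) (β ^ 2 * t))
    (hφt : ∀ ξ η t, φt ξ η t =
      β ^ 2 * φ (β * ξ + β * lam₁ * t) (β * η + β * lam₂ * t) (β ^ 2 * t) + α / 4)
    (ξ η t : ℂ) : potentialOp ρt φt ξ η t = 0 := by
  set X := β * ξ + β * lam₁ * t
  set Y := β * η + β * lam₂ * t
  set T := β ^ 2 * t
  have hφη : ∀ ξ', deriv (fun η' => φt ξ' η' t) η
      = β ^ 2 * β * deriv (fun z => φ (β * ξ' + β * lam₁ * t) z T) Y := fun ξ' => by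
    simp only [hφt, deriv_add_const]
    exact deriv_const_mul_comp_mul_add _ _ _ (fun z => φ (β * ξ' + β * lam₁ * t) z T) η
  have hφξη : deriv (fun ξ' => deriv (fun η' => φt ξ' η' t) η) ξ
      = β ^ 4 * deriv (fun ξ' => deriv (fun η' => φ ξ' η' T) Y) X := by
    simp only [hφη]
    rw [deriv_const_mul_comp_mul_add _ _ _ (fun z => deriv (fun y => φ z y T) Y)]
    ring
  have hρξξ : deriv (fun ξ' => deriv (fun ξ'' => ρt ξ'' η t) ξ') ξ
      = β ^ 4 * deriv (deriv fun z => ρ z Y T) X := by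
    simp only [hρt]
    rw [deriv_deriv_const_mul_comp_mul_add _ _ _ (fun z => ρ z Y T)]
    ring
  have hρηη : deriv (fun η' => deriv (fun η'' => ρt ξ η'' t) η') η
      = β ^ 4 * deriv (deriv fun z => ρ X z T) Y := by
    simp only [hρt]
    rw [deriv_deriv_const_mul_comp_mul_add _ _ _ (fun z => ρ X z T)]
    ring
  have h := hsys X Y T
  unfold potentialOp at h ⊢
  rw [hφξη, hρξξ, hρηη]
  linear_combination β ^ 4 * h

theorem stmt_16_general (ψ ψs φ : ℂ → ℂ → ℂ → ℂ)
    (hψhol : Differentiable ℂ (fun p : ℂ × ℂ × ℂ => ψ p.1 p.2.1 p.2.2))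
    (hψshol : Differentiable ℂ (fun p : ℂ × ℂ × ℂ => ψs p.1 p.2.1 p.2.2))
    (hsys₁ : ∀ ξ η t : ℂ,
      I * deriv (fun t' : ℂ => ψ ξ η t') t
        + (1 / 2) * (deriv (fun ξ' : ℂ => deriv (fun ξ'' : ℂ => ψ ξ'' η t) ξ') ξ
            + deriv (fun η' : ℂ => deriv (fun η'' : ℂ => ψ ξ η'' t) η') η)
        + 2 * φ ξ η t * ψ ξ η t = 0)
    (hsys₂ : ∀ ξ η t : ℂ,
      -I * deriv (fun t' : ℂ => ψs ξ η t') t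
        + (1 / 2) * (deriv (fun ξ' : ℂ => deriv (fun ξ'' : ℂ => ψs ξ'' η t) ξ') ξ
            + deriv (fun η' : ℂ => deriv (fun η'' : ℂ => ψs ξ η'' t) η') η)
        + 2 * φ ξ η t * ψs ξ η t = 0)
    (hsys₃ : ∀ ξ η t : ℂ,
      deriv (fun ξ' : ℂ => deriv (fun η' : ℂ => φ ξ' η' t) η) ξ
        + (1 / 2) * (deriv (fun ξ' : ℂ =>
              deriv (fun ξ'' : ℂ => ψ ξ'' η t * ψs ξ'' η t) ξ') ξ
            + deriv (fun η' : ℂ =>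
              deriv (fun η'' : ℂ => ψ ξ η'' t * ψs ξ η'' t) η') η) = 0)
    (β lam₁ lam₂ α : ℂ)
    (ψt ψst φt : ℂ → ℂ → ℂ → ℂ)
    (hψt : ∀ ξ η t : ℂ, ψt ξ η t =
      ψ (β * ξ + β * lam₁ * t) (β * η + β * lam₂ * t) (β ^ 2 * t) *
        Complex.exp (-(I * (lam₁ * ξ + lam₂ * η + (lam₁ ^ 2 + lam₂ ^ 2 - α) * t / 2))))
    (hψst : ∀ ξ η t : ℂ, ψst ξ η t =
      β ^ 2 * ψs (β * ξ + β * lam₁ * t) (β * η + β * lam₂ * t) (β ^ 2 * t) *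
        Complex.exp (I * (lam₁ * ξ + lam₂ * η + (lam₁ ^ 2 + lam₂ ^ 2 - α) * t / 2)))
    (hφt : ∀ ξ η t : ℂ, φt ξ η t =
      β ^ 2 * φ (β * ξ + β * lam₁ * t) (β * η + β * lam₂ * t) (β ^ 2 * t) + α / 4) :
    (∀ ξ η t : ℂ,
      I * deriv (fun t' : ℂ => ψt ξ η t') t
        + (1 / 2) * (deriv (fun ξ' : ℂ => deriv (fun ξ'' : ℂ => ψt ξ'' η t) ξ') ξ
            + deriv (fun η' : ℂ => deriv (fun η'' : ℂ => ψt ξ η'' t) η') η)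
        + 2 * φt ξ η t * ψt ξ η t = 0) ∧
    (∀ ξ η t : ℂ,
      -I * deriv (fun t' : ℂ => ψst ξ η t') t
        + (1 / 2) * (deriv (fun ξ' : ℂ => deriv (fun ξ'' : ℂ => ψst ξ'' η t) ξ') ξ
            + deriv (fun η' : ℂ => deriv (fun η'' : ℂ => ψst ξ η'' t) η') η)
        + 2 * φt ξ η t * ψst ξ η t = 0) ∧
    (∀ ξ η t : ℂ,
      deriv (fun ξ' : ℂ => deriv (fun η' : ℂ => φt ξ' η' t) η) ξ
        + (1 / 2) * (deriv (fun ξ' : ℂ =>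
              deriv (fun ξ'' : ℂ => ψt ξ'' η t * ψst ξ'' η t) ξ') ξ
            + deriv (fun η' : ℂ =>
              deriv (fun η'' : ℂ => ψt ξ η'' t * ψst ξ η'' t) η') η) = 0) := by
  have hρt : ∀ ξ η t, ψt ξ η t * ψst ξ η t = β ^ 2 * (ψ (β * ξ + β * lam₁ * t)
      (β * η + β * lam₂ * t) (β ^ 2 * t) * ψs (β * ξ + β * lam₁ * t) (β * η + β * lam₂ * t)
        (β ^ 2 * t)) := fun ξ η t => by
    rw [hψt, hψst, exp_neg]
    field_simp
  exact ⟨schrodingerOp_transform_eq_zero I_sq hψhol hsys₁ 1 β lam₁ lam₂ α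
      (fun ξ η t => by rw [hψt, one_mul]) hφt,
    schrodingerOp_transform_eq_zero (by rw [neg_sq, I_sq]) hψshol hsys₂ (β ^ 2) β lam₁ lam₂ α
      (fun ξ η t => by rw [hψst, neg_mul, neg_neg]) hφt,
    potentialOp_transform_eq_zero (ρt := fun ξ η t => ψt ξ η t * ψst ξ η t) hsys₃ β lam₁ lam₂ α
      hρt hφt⟩

/-- invariance of the complexified Davey–Stewartson system under the
transformation induced by a change of local parameters. -/
theorem stmt_16 (ψ ψs φ : ℂ → ℂ → ℂ → ℂ)
    (hψhol : Differentiable ℂ (fun p : ℂ × ℂ × ℂ => ψ p.1 p.2.1 p.2.2))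
    (hψshol : Differentiable ℂ (fun p : ℂ × ℂ × ℂ => ψs p.1 p.2.1 p.2.2))
    (hφhol : Differentiable ℂ (fun p : ℂ × ℂ × ℂ => φ p.1 p.2.1 p.2.2))
    (hsys₁ : ∀ ξ η t : ℂ,
      I * deriv (fun t' : ℂ => ψ ξ η t') t
        + (1 / 2) * (deriv (fun ξ' : ℂ => deriv (fun ξ'' : ℂ => ψ ξ'' η t) ξ') ξ
            + deriv (fun η' : ℂ => deriv (fun η'' : ℂ => ψ ξ η'' t) η') η)
        + 2 * φ ξ η t * ψ ξ η t = 0)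
    (hsys₂ : ∀ ξ η t : ℂ,
      -I * deriv (fun t' : ℂ => ψs ξ η t') t
        + (1 / 2) * (deriv (fun ξ' : ℂ => deriv (fun ξ'' : ℂ => ψs ξ'' η t) ξ') ξ
            + deriv (fun η' : ℂ => deriv (fun η'' : ℂ => ψs ξ η'' t) η') η)
        + 2 * φ ξ η t * ψs ξ η t = 0)
    (hsys₃ : ∀ ξ η t : ℂ,
      deriv (fun ξ' : ℂ => deriv (fun η' : ℂ => φ ξ' η' t) η) ξ
        + (1 / 2) * (deriv (fun ξ' : ℂ =>
              deriv (fun ξ'' : ℂ => ψ ξ'' η t * ψs ξ'' η t) ξ') ξ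
            + deriv (fun η' : ℂ =>
              deriv (fun η'' : ℂ => ψ ξ η'' t * ψs ξ η'' t) η') η) = 0)
    (β lam₁ lam₂ α : ℂ) (hβ : β ≠ 0)
    (ψt ψst φt : ℂ → ℂ → ℂ → ℂ)
    (hψt : ∀ ξ η t : ℂ, ψt ξ η t =
      ψ (β * ξ + β * lam₁ * t) (β * η + β * lam₂ * t) (β ^ 2 * t) *
        Complex.exp (-(I * (lam₁ * ξ + lam₂ * η + (lam₁ ^ 2 + lam₂ ^ 2 - α) * t / 2))))
    (hψst : ∀ ξ η t : ℂ, ψst ξ η t =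
      β ^ 2 * ψs (β * ξ + β * lam₁ * t) (β * η + β * lam₂ * t) (β ^ 2 * t) *
        Complex.exp (I * (lam₁ * ξ + lam₂ * η + (lam₁ ^ 2 + lam₂ ^ 2 - α) * t / 2)))
    (hφt : ∀ ξ η t : ℂ, φt ξ η t =
      β ^ 2 * φ (β * ξ + β * lam₁ * t) (β * η + β * lam₂ * t) (β ^ 2 * t) + α / 4) :
    (∀ ξ η t : ℂ,
      I * deriv (fun t' : ℂ => ψt ξ η t') t
        + (1 / 2) * (deriv (fun ξ' : ℂ => deriv (fun ξ'' : ℂ => ψt ξ'' η t) ξ') ξ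
            + deriv (fun η' : ℂ => deriv (fun η'' : ℂ => ψt ξ η'' t) η') η)
        + 2 * φt ξ η t * ψt ξ η t = 0) ∧
    (∀ ξ η t : ℂ,
      -I * deriv (fun t' : ℂ => ψst ξ η t') t
        + (1 / 2) * (deriv (fun ξ' : ℂ => deriv (fun ξ'' : ℂ => ψst ξ'' η t) ξ') ξ
            + deriv (fun η' : ℂ => deriv (fun η'' : ℂ => ψst ξ η'' t) η') η)
        + 2 * φt ξ η t * ψst ξ η t = 0) ∧
    (∀ ξ η t : ℂ,
      deriv (fun ξ' : ℂ => deriv (fun η' : ℂ => φt ξ' η' t) η) ξ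
        + (1 / 2) * (deriv (fun ξ' : ℂ =>
              deriv (fun ξ'' : ℂ => ψt ξ'' η t * ψst ξ'' η t) ξ') ξ
            + deriv (fun η' : ℂ =>
              deriv (fun η'' : ℂ => ψt ξ η'' t * ψst ξ η'' t) η') η) = 0) :=
  stmt_16_general ψ ψs φ hψhol hψshol hsys₁ hsys₂ hsys₃ β lam₁ lam₂ α ψt ψst φt hψt hψst hφt
end
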